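/- If Y is the complete intersection of two general divisors of type (a1,a2,a3) on P^1×P^1×P^1 (with all ai ≥ 0, not all zero), then the arithmetic genus of Y equals 6·a1·a2·a3 - 2·(a1·a2+a2·a3+a3·a1) + 1. -/

import Mathlib

/-!
The relation `t₁² = t₂² = t₃² = 0` kills every cubic monomial except `t₁t₂t₃`, so expanding
`(a₁t₁+a₂t₂+a₃t₃)²·((2a₁-2)t₁+(2a₂-2)t₂+(2a₃-2)t₃)` leaves only a multiple of `t₁t₂t₃`, namely
`2·(6a₁a₂a₃ - 2(a₁a₂+a₂a₃+a₃a₁))`. Comparing with `(2p_a - 2)·t₁t₂t₃` determines `p_a`, because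
`t₁t₂t₃` has infinite order: the monomial `X₀X₁X₂` lies outside the monomial ideal
`(X₀², X₁², X₂²)`.
-/

/-- `ℤ[t₁,t₂,t₃]/(t₁², t₂², t₃²)`, the Chow ring of `ℙ¹ × ℙ¹ × ℙ¹`. -/
noncomputable abbrev ChowP111 : Type :=
  MvPolynomial (Fin 3) ℤ ⧸
    Ideal.span (Set.range fun i : Fin 3 => (MvPolynomial.X i : MvPolynomial (Fin 3) ℤ) ^ 2)

/-- The class of `tᵢ` in `ℤ[t₁,t₂,t₃]/(t₁², t₂², t₃²)`. -/
noncomputable def t (i : Fin 3) : ChowP111 :=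
  Ideal.Quotient.mk _ (MvPolynomial.X i)

theorem sq_mul_eq_zsmul_mul_mul {R : Type*} [CommRing R] {x y z : R}
    (hx : x ^ 2 = 0) (hy : y ^ 2 = 0) (hz : z ^ 2 = 0) (a b c d e f : ℤ) :
    (a • x + b • y + c • z) ^ 2 * (d • x + e • y + f • z) =
      (2 * (a * b * f + a * c * e + b * c * d)) • (x * y * z) := by
  simp only [zsmul_eq_mul]
  linear_combination (norm := (push_cast; ring1))
    (a ^ 2 * (d * x + e * y + f * z) + 2 * a * (b * d * y + c * d * z) : R) * hx
    + (b ^ 2 * (d * x + e * y + f * z) + 2 * b * (a * e * x + c * e * z) : R) * hy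
    + (c ^ 2 * (d * x + e * y + f * z) + 2 * c * (a * f * x + b * f * y) : R) * hz

theorem t_sq (i : Fin 3) : t i ^ 2 = 0 :=
  Ideal.Quotient.eq_zero_iff_mem.mpr (Ideal.subset_span ⟨i, rfl⟩)

open MvPolynomial in
theorem zsmul_t_mul_t_mul_t_eq_zero_iff {n : ℤ} : n • (t 0 * t 1 * t 2) = 0 ↔ n = 0 := by
  refine ⟨fun h => ?_, fun h => by rw [h, zero_smul]⟩
  set m : Fin 3 →₀ ℕ := Finsupp.single 0 1 + Finsupp.single 1 1 + Finsupp.single 2 1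
  have hmk : n • (t 0 * t 1 * t 2) = Ideal.Quotient.mk _ (monomial m n) := by
    have hm : monomial m n = C n * (X 0 * X 1 * X 2) := by
      simp only [m, X, monomial_mul, C_mul_monomial, mul_one]
    rw [hm, C_mul', map_zsmul, map_mul, map_mul, t, t, t]
  have hspan : Set.range (fun i : Fin 3 => (X i : MvPolynomial (Fin 3) ℤ) ^ 2) =
      (fun s => monomial s (1 : ℤ)) '' Set.range (fun i : Fin 3 => Finsupp.single i 2) := by
    rw [← Set.range_comp]
    simp only [Function.comp_def, X_pow_eq_monomial]
  rw [hmk, Ideal.Quotient.eq_zero_iff_mem, hspan, mem_ideal_span_monomial_image] at h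
  by_contra hn
  obtain ⟨_, ⟨i, rfl⟩, hle⟩ := h m (by simp [support_monomial, hn])
  have hi := hle i
  fin_cases i <;> simp [m] at hi

theorem genus_of_complete_intersection_general (a1 a2 a3 : ℤ)
    (pa : ℤ)
    (hpa : (a1 • t 0 + a2 • t 1 + a3 • t 2) ^ 2 *
        ((2 * a1 - 2) • t 0 + (2 * a2 - 2) • t 1 + (2 * a3 - 2) • t 2) =
      (2 * pa - 2) • (t 0 * t 1 * t 2)) :
    pa = 6 * a1 * a2 * a3 - 2 * (a1 * a2 + a2 * a3 + a3 * a1) + 1 := by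
  rw [sq_mul_eq_zsmul_mul_mul (t_sq 0) (t_sq 1) (t_sq 2), eq_comm, ← sub_eq_zero, ← sub_smul,
    zsmul_t_mul_t_mul_t_eq_zero_iff] at hpa
  linarith

/-- Let `Y` be the complete intersection of two general divisors of type `(a₁,a₂,a₃)` on
`ℙ¹ × ℙ¹ × ℙ¹`, with all `aᵢ ≥ 0` and not all zero.  Its class in the Chow ring is
`(a₁t₁+a₂t₂+a₃t₃)²` and, by adjunction, `ω_Y ≅ O_Y(2a₁-2, 2a₂-2, 2a₃-2)`, so the
arithmetic genus `p_a(Y)` is determined by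
`(2·p_a(Y) - 2)·t₁t₂t₃ = (a₁t₁+a₂t₂+a₃t₃)²·((2a₁-2)t₁+(2a₂-2)t₂+(2a₃-2)t₃)`.
Then `p_a(Y) = 6a₁a₂a₃ - 2(a₁a₂+a₂a₃+a₃a₁) + 1`. -/
theorem genus_of_complete_intersection (a1 a2 a3 : ℤ)
    (h1 : 0 ≤ a1) (h2 : 0 ≤ a2) (h3 : 0 ≤ a3)
    (hne : ¬(a1 = 0 ∧ a2 = 0 ∧ a3 = 0)) (pa : ℤ)
    (hpa : (a1 • t 0 + a2 • t 1 + a3 • t 2) ^ 2 *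
        ((2 * a1 - 2) • t 0 + (2 * a2 - 2) • t 1 + (2 * a3 - 2) • t 2) =
      (2 * pa - 2) • (t 0 * t 1 * t 2)) :
    pa = 6 * a1 * a2 * a3 - 2 * (a1 * a2 + a2 * a3 + a3 * a1) + 1 :=
  genus_of_complete_intersection_general a1 a2 a3 pa hpa
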